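/- arXiv:1606.00300 — 3 statements merged into one kernel-verified Lean document; each statement's English description precedes it below -/
import Mathlib

section
/- Five distinct points in the projective plane over a field lie in general position (no three collinear) if and only if they lie on a smooth conic. -/
/-!
Conics form a six-dimensional space, so a nonzero conic passes through any five points. If it
were singular at some point over the algebraic closure, it would split into two lines over that field, and
by pigeonhole three of the five points would lie on one of them; collinearity is the vanishing of
a determinant, so it descends to `k`. Conversely, a conic through three distinct collinear points
contains their line, and a conic containing the line through `a` and `b` is singular: its
gradients at `a` and `b` are orthogonal to both points, hence multiples of `a × b`, and the
combination of `a` and `b` that cancels them is a singular point.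
-/

/-- Three points (given by coordinate vectors) in `ℙ²(k)` are collinear:
there is a nonzero linear form vanishing at all three. -/
def Collinear3 {k : Type*} [Field k] (a b c : Fin 3 → k) : Prop :=
  ∃ f : (Fin 3 → k) →ₗ[k] k, f ≠ 0 ∧ f a = 0 ∧ f b = 0 ∧ f c = 0

/-- A plane conic (homogeneous quadratic form) is smooth: at no point of the zero locus
over the algebraic closure do all partial derivatives vanish. -/
def SmoothPlaneCurve {k : Type*} [Field k] (Q : MvPolynomial (Fin 3) k) : Prop :=
  ∀ v : Fin 3 → AlgebraicClosure k, v ≠ 0 → MvPolynomial.aeval v Q = 0 →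
    ∃ i : Fin 3, MvPolynomial.aeval v (MvPolynomial.pderiv i Q) ≠ 0

open Matrix

section Collinear

variable {k : Type*} [Field k] {a b c : Fin 3 → k}

lemma collinear3_iff_exists_dotProduct_eq_zero :
    Collinear3 a b c ↔ ∃ w ≠ 0, w ⬝ᵥ a = 0 ∧ w ⬝ᵥ b = 0 ∧ w ⬝ᵥ c = 0 := by
  rw [Collinear3, ← (dotProductEquiv k (Fin 3)).toEquiv.exists_congr_right]
  simp

lemma collinear3_iff_det_eq_zero : Collinear3 a b c ↔ det (of ![a, b, c]) = 0 := by
  rw [collinear3_iff_exists_dotProduct_eq_zero, ← exists_mulVec_eq_zero_iff]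
  simp [funext_iff, Fin.forall_fin_succ, dotProduct_comm]

lemma collinear3_map_iff {K : Type*} [Field K] (f : k →+* K) :
    Collinear3 (f ∘ a) (f ∘ b) (f ∘ c) ↔ Collinear3 a b c := by
  rw [collinear3_iff_det_eq_zero, collinear3_iff_det_eq_zero, ← map_eq_zero_iff f f.injective,
    RingHom.map_det]
  congr! 2
  ext i j
  fin_cases i <;> rfl

lemma mem_span_pair_of_collinear3 (hab : LinearIndependent k ![a, b]) (h : Collinear3 a b c) :
    c ∈ Submodule.span k {a, b} := by
  obtain ⟨f, hf, ha, hb, hc⟩ := h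
  have hdet : det (of ![c, a, b]) = 0 := collinear3_iff_det_eq_zero.mp ⟨f, hf, hc, ha, hb⟩
  rw [← not_ne_iff, ← isUnit_iff_ne_zero, ← isUnit_iff_isUnit_det,
    ← linearIndependent_rows_iff_isUnit] at hdet
  have := mt linearIndependent_finCons.mpr hdet
  rw [range_cons_cons_empty] at this
  tauto

end Collinear

lemma exists_eq_smul_cross_of_dotProduct_eq_zero {F : Type*} [Field F] {a b g : Fin 3 → F}
    (hab : a ⨯₃ b ≠ 0) (ha : a ⬝ᵥ g = 0) (hb : b ⬝ᵥ g = 0) : ∃ t : F, g = t • (a ⨯₃ b) := by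
  have hcross : a ⨯₃ b ⨯₃ g = 0 := by simp [cross_cross_eq_smul_sub_smul, ha, hb]
  have := mt crossProduct_ne_zero_iff_linearIndependent.mpr (not_not.mpr hcross)
  simpa [LinearIndependent.pair_iff' hab, eq_comm] using this

lemma RingHom.comp_ne_zero {ι F K : Type*} [Field F] [Semiring K] [Nontrivial K] (f : F →+* K)
    {x : ι → F} (hx : x ≠ 0) : f ∘ x ≠ 0 :=
  fun h => hx (funext fun i => f.injective (by simpa using congrFun h i))

lemma exists_binary_quadratic_eq_mul {K : Type*} [Field K] [IsAlgClosed K] {α β γ : K}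
    (h : ¬(α = 0 ∧ β = 0 ∧ γ = 0)) :
    ∃ p q r s : K, ¬(p = 0 ∧ q = 0) ∧ ¬(r = 0 ∧ s = 0) ∧
      ∀ t u : K, α * t ^ 2 + β * t * u + γ * u ^ 2 = (p * t + q * u) * (r * t + s * u) := by
  by_cases hα : α = 0
  · refine ⟨β, γ, 0, 1, fun hβγ => h ⟨hα, hβγ⟩, by simp, fun t u => by rw [hα]; ring⟩
  · obtain ⟨z, hz⟩ := IsAlgClosed.exists_root (Polynomial.C α * Polynomial.X ^ 2 +
      Polynomial.C β * Polynomial.X + Polynomial.C γ) (by simp [Polynomial.degree_quadratic hα])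
    have hroot : α * z ^ 2 + β * z + γ = 0 := by simpa [sq] using hz
    refine ⟨α, -α * z, 1, β / α + z, fun h0 => hα h0.1, by simp, fun t u => ?_⟩
    field_simp
    linear_combination u ^ 2 * hroot

namespace PlaneConic

open MvPolynomial

section CommRing

variable {R : Type*} [CommRing R]

def eval (c : Fin 6 → R) (x : Fin 3 → R) : R :=
  c 0 * x 0 ^ 2 + c 1 * x 1 ^ 2 + c 2 * x 2 ^ 2 +
    c 3 * x 0 * x 1 + c 4 * x 0 * x 2 + c 5 * x 1 * x 2

def polarMatrix (c : Fin 6 → R) : Matrix (Fin 3) (Fin 3) R :=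
  !![2 * c 0, c 3, c 4; c 3, 2 * c 1, c 5; c 4, c 5, 2 * c 2]

def grad (c : Fin 6 → R) (x : Fin 3 → R) : Fin 3 → R :=
  polarMatrix c *ᵥ x

def IsSingularPoint (c : Fin 6 → R) (v : Fin 3 → R) : Prop :=
  v ≠ 0 ∧ eval c v = 0 ∧ grad c v = 0

lemma polarMatrix_transpose (c : Fin 6 → R) : (polarMatrix c)ᵀ = polarMatrix c := by
  ext i j; fin_cases i <;> fin_cases j <;> rfl

lemma eval_smul_add_smul (c : Fin 6 → R) (s t : R) (x y : Fin 3 → R) :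
    eval c (s • x + t • y) = s ^ 2 * eval c x + t ^ 2 * eval c y + s * t * (x ⬝ᵥ grad c y) := by
  simp only [eval, grad, polarMatrix, mulVec, dotProduct, Fin.sum_univ_three, Pi.add_apply,
    Pi.smul_apply, smul_eq_mul, of_apply, cons_val', cons_val_fin_one, cons_val_zero, cons_val_one,
    cons_val]
  ring

lemma grad_smul_add_smul (c : Fin 6 → R) (s t : R) (x y : Fin 3 → R) :
    grad c (s • x + t • y) = s • grad c x + t • grad c y := by
  simp only [grad, mulVec_add, mulVec_smul]

lemma dotProduct_grad_comm (c : Fin 6 → R) (x y : Fin 3 → R) :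
    x ⬝ᵥ grad c y = y ⬝ᵥ grad c x := by
  rw [grad, grad, dotProduct_mulVec, ← mulVec_transpose, polarMatrix_transpose, dotProduct_comm]

lemma dotProduct_grad_self (c : Fin 6 → R) (x : Fin 3 → R) :
    x ⬝ᵥ grad c x = 2 * eval c x := by
  simp only [eval, grad, polarMatrix, mulVec, dotProduct, Fin.sum_univ_three, of_apply, cons_val',
    cons_val_fin_one, cons_val_zero, cons_val_one, cons_val]
  ring

lemma eq_zero_of_forall_eval_eq_zero {c : Fin 6 → R} (h : ∀ x, eval c x = 0) : c = 0 := by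
  have h0 := h ![1, 0, 0]
  have h1 := h ![0, 1, 0]
  have h2 := h ![0, 0, 1]
  have h3 := h ![1, 1, 0]
  have h4 := h ![1, 0, 1]
  have h5 := h ![0, 1, 1]
  simp [eval] at h0 h1 h2 h3 h4 h5
  ext i; fin_cases i <;> simp <;> grind

lemma eval_map {S : Type*} [CommRing S] (f : R →+* S) (c : Fin 6 → R) (x : Fin 3 → R) :
    eval (f ∘ c) (f ∘ x) = f (eval c x) := by
  simp [eval]

lemma grad_map {S : Type*} [CommRing S] (f : R →+* S) (c : Fin 6 → R) (x : Fin 3 → R) :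
    grad (f ∘ c) (f ∘ x) = f ∘ grad c x := by
  ext i
  fin_cases i <;> simp [grad, polarMatrix, mulVec, dotProduct, Fin.sum_univ_three, map_ofNat]

noncomputable def toMvPolynomial (c : Fin 6 → R) : MvPolynomial (Fin 3) R :=
  C (c 0) * X 0 * X 0 + C (c 1) * X 1 * X 1 + C (c 2) * X 2 * X 2 +
    C (c 3) * X 0 * X 1 + C (c 4) * X 0 * X 2 + C (c 5) * X 1 * X 2

lemma aeval_toMvPolynomial {S : Type*} [CommRing S] [Algebra R S] (c : Fin 6 → R)
    (v : Fin 3 → S) : aeval v (toMvPolynomial c) = eval (algebraMap R S ∘ c) v := by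
  simp [toMvPolynomial, eval]; ring

lemma aeval_pderiv_toMvPolynomial {S : Type*} [CommRing S] [Algebra R S] (c : Fin 6 → R)
    (v : Fin 3 → S) (i : Fin 3) :
    aeval v (pderiv i (toMvPolynomial c)) = grad (algebraMap R S ∘ c) v i := by
  fin_cases i <;>
    simp [toMvPolynomial, grad, polarMatrix, pderiv_X, mulVec, dotProduct, Fin.sum_univ_three] <;>
    ring

lemma eval_toMvPolynomial (c : Fin 6 → R) (x : Fin 3 → R) :
    MvPolynomial.eval x (toMvPolynomial c) = eval c x := by
  simp [toMvPolynomial, eval]; ring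

lemma toMvPolynomial_ne_zero {c : Fin 6 → R} (hc : c ≠ 0) : toMvPolynomial c ≠ 0 := by
  refine fun h => hc (eq_zero_of_forall_eval_eq_zero fun x => ?_)
  rw [← eval_toMvPolynomial, h, map_zero]

lemma isHomogeneous_toMvPolynomial (c : Fin 6 → R) : (toMvPolynomial c).IsHomogeneous 2 := by
  have h : ∀ a i j, (C a * X i * X j : MvPolynomial (Fin 3) R).IsHomogeneous 2 :=
    fun a i j => (isHomogeneous_C_mul_X a i).mul (isHomogeneous_X R j)
  exact ((((h _ _ _).add (h _ _ _)).add (h _ _ _)).add (h _ _ _)).add (h _ _ _) |>.add (h _ _ _)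

lemma toMvPolynomial_add (c c' : Fin 6 → R) :
    toMvPolynomial (c + c') = toMvPolynomial c + toMvPolynomial c' := by
  simp only [toMvPolynomial, Pi.add_apply, C_add]; ring

lemma exists_toMvPolynomial_eq_monomial {d : Fin 3 →₀ ℕ} (hd : d.degree = 2) (a : R) :
    ∃ c, toMvPolynomial c = monomial d a := by
  rw [Finsupp.degree_eq_sum, Fin.sum_univ_three] at hd
  rw [monomial_eq, Finsupp.prod_fintype _ _ (by simp), Fin.prod_univ_three]
  rcases (by omega : (d 0 = 2 ∧ d 1 = 0 ∧ d 2 = 0) ∨ (d 0 = 0 ∧ d 1 = 2 ∧ d 2 = 0) ∨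
      (d 0 = 0 ∧ d 1 = 0 ∧ d 2 = 2) ∨ (d 0 = 1 ∧ d 1 = 1 ∧ d 2 = 0) ∨
      (d 0 = 1 ∧ d 1 = 0 ∧ d 2 = 1) ∨ (d 0 = 0 ∧ d 1 = 1 ∧ d 2 = 1)) with
    h | h | h | h | h | h <;> simp only [h.1, h.2.1, h.2.2]
  · exact ⟨![a, 0, 0, 0, 0, 0], by simp [toMvPolynomial]; ring⟩
  · exact ⟨![0, a, 0, 0, 0, 0], by simp [toMvPolynomial]; ring⟩
  · exact ⟨![0, 0, a, 0, 0, 0], by simp [toMvPolynomial]; ring⟩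
  · exact ⟨![0, 0, 0, a, 0, 0], by simp [toMvPolynomial]; ring⟩
  · exact ⟨![0, 0, 0, 0, a, 0], by simp [toMvPolynomial]; ring⟩
  · exact ⟨![0, 0, 0, 0, 0, a], by simp [toMvPolynomial]; ring⟩

lemma exists_eq_toMvPolynomial {Q : MvPolynomial (Fin 3) R} (hQ : Q.IsHomogeneous 2) :
    ∃ c, Q = toMvPolynomial c := by
  rw [Q.as_sum]
  refine Finset.sum_induction _ (fun P => ∃ c, P = toMvPolynomial c) ?_ ⟨0, ?_⟩ ?_
  · rintro _ _ ⟨c, rfl⟩ ⟨c', rfl⟩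
    exact ⟨c + c', (toMvPolynomial_add c c').symm⟩
  · simp [toMvPolynomial]
  · intro d hd
    have hdeg : d.degree = 2 := by
      rw [Finsupp.degree_eq_weight_one]; exact hQ (mem_support_iff.mp hd)
    obtain ⟨c, hc⟩ := exists_toMvPolynomial_eq_monomial hdeg (coeff d Q)
    exact ⟨c, hc.symm⟩

end CommRing

section Field

variable {F : Type*} [Field F]

lemma IsSingularPoint.map {K : Type*} [Field K] (f : F →+* K) {c : Fin 6 → F} {v : Fin 3 → F}
    (hv : IsSingularPoint c v) : IsSingularPoint (f ∘ c) (f ∘ v) := by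
  obtain ⟨hv0, hev, hgrad⟩ := hv
  refine ⟨f.comp_ne_zero hv0, ?_, ?_⟩
  · rw [eval_map, hev, map_zero]
  · rw [grad_map, hgrad]; ext; simp

lemma smoothPlaneCurve_toMvPolynomial_iff (c : Fin 6 → F) :
    SmoothPlaneCurve (toMvPolynomial c) ↔
      ∀ v, ¬ IsSingularPoint (algebraMap F (AlgebraicClosure F) ∘ c) v := by
  simp [SmoothPlaneCurve, IsSingularPoint, aeval_toMvPolynomial, aeval_pderiv_toMvPolynomial,
    funext_iff]

lemma exists_ne_zero_forall_eval_eq_zero {ι : Type*} [Fintype ι] (hι : Fintype.card ι < 6)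
    (A : ι → Fin 3 → F) : ∃ c ≠ 0, ∀ m, eval c (A m) = 0 := by
  let Φ : (Fin 6 → F) →ₗ[F] (ι → F) :=
    { toFun := fun c m => eval c (A m)
      map_add' := fun c c' => by ext; simp only [eval, Pi.add_apply]; ring
      map_smul' := fun a c => by
        ext; simp only [eval, Pi.smul_apply, smul_eq_mul, RingHom.id_apply]; ring }
  have hker : LinearMap.ker Φ ≠ ⊥ := LinearMap.ker_ne_bot_of_finrank_lt (by simpa using hι)
  obtain ⟨c, hc, hc0⟩ := (Submodule.ne_bot_iff _).mp hker
  exact ⟨c, hc0, fun m => congrFun (LinearMap.mem_ker.mp hc) m⟩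

lemma forall_eval_smul_add_smul_eq_zero {c : Fin 6 → F} {a b : Fin 3 → F}
    (ha : eval c a = 0) (hb : eval c b = 0) {s₀ t₀ : F} (hs₀ : s₀ ≠ 0) (ht₀ : t₀ ≠ 0)
    (h : eval c (s₀ • a + t₀ • b) = 0) (s t : F) : eval c (s • a + t • b) = 0 := by
  rw [eval_smul_add_smul, ha, hb] at h ⊢
  have hpolar : a ⬝ᵥ grad c b = 0 := by simpa [hs₀, ht₀] using h
  simp [hpolar]

lemma exists_isSingularPoint_of_forall_eval_smul_add_smul_eq_zero {c : Fin 6 → F}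
    {a b : Fin 3 → F} (hab : LinearIndependent F ![a, b])
    (hline : ∀ s t : F, eval c (s • a + t • b) = 0) : ∃ v, IsSingularPoint c v := by
  have ha : eval c a = 0 := by simpa using hline 1 0
  have hb : eval c b = 0 := by simpa using hline 0 1
  have hpolar : a ⬝ᵥ grad c b = 0 := by
    have h := hline 1 1
    rw [eval_smul_add_smul, ha, hb] at h
    simpa using h
  have hn : a ⨯₃ b ≠ 0 := crossProduct_ne_zero_iff_linearIndependent.mpr hab
  obtain ⟨t₁, ht₁⟩ := exists_eq_smul_cross_of_dotProduct_eq_zero hn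
    (by rw [dotProduct_grad_self, ha, mul_zero]) (by rw [dotProduct_grad_comm, hpolar])
  obtain ⟨t₂, ht₂⟩ := exists_eq_smul_cross_of_dotProduct_eq_zero hn hpolar
    (by rw [dotProduct_grad_self, hb, mul_zero])
  by_cases h₁ : t₁ = 0
  · exact ⟨a, hab.ne_zero 0, ha, by simp [ht₁, h₁]⟩
  refine ⟨t₂ • a + (-t₁) • b, fun h => h₁ ?_, hline _ _, ?_⟩
  · simpa using (LinearIndependent.pair_iff.mp hab _ _ h).2
  · rw [grad_smul_add_smul, ht₁, ht₂]
    module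

lemma exists_isSingularPoint_of_collinear3 {c : Fin 6 → F} {a b d : Fin 3 → F} (ha₀ : a ≠ 0)
    (hab : ∀ t : F, t • a ≠ b) (had : ∀ t : F, t • a ≠ d) (hbd : ∀ t : F, t • b ≠ d)
    (hcol : Collinear3 a b d) (ha : eval c a = 0) (hb : eval c b = 0) (hd : eval c d = 0) :
    ∃ v, IsSingularPoint c v := by
  have hind : LinearIndependent F ![a, b] := (LinearIndependent.pair_iff' ha₀).mpr hab
  obtain ⟨s, t, hst⟩ := Submodule.mem_span_pair.mp (mem_span_pair_of_collinear3 hind hcol)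
  have hs : s ≠ 0 := by rintro rfl; exact hbd t (by simpa using hst)
  have ht : t ≠ 0 := by rintro rfl; exact had s (by simpa using hst)
  exact exists_isSingularPoint_of_forall_eval_smul_add_smul_eq_zero hind
    (forall_eval_smul_add_smul_eq_zero ha hb hs ht (hst ▸ hd))

end Field

section IsAlgClosed

variable {K : Type*} [Field K] [IsAlgClosed K]

lemma exists_eval_eq_mul_of_isSingularPoint {c : Fin 6 → K} (hc : c ≠ 0) {v : Fin 3 → K}
    (hv : IsSingularPoint c v) :
    ∃ w₁ w₂ : Fin 3 → K, w₁ ≠ 0 ∧ w₂ ≠ 0 ∧ ∀ x, eval c x = (w₁ ⬝ᵥ x) * (w₂ ⬝ᵥ x) := by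
  obtain ⟨hv0, hev, hgrad⟩ := hv
  obtain ⟨j, hj⟩ : ∃ j, v j ≠ 0 := Function.ne_iff.mp hv0
  have htrans : ∀ x (t : K), eval c (x + t • v) = eval c x := fun x t => by
    simpa [hev, hgrad] using eval_smul_add_smul c 1 t x v
  -- `eval c` is invariant under translation by `v`, so it is a binary quadratic form in the
  -- coordinates `ℓ₁ ⬝ᵥ x`, `ℓ₂ ⬝ᵥ x` of `x` modulo `v` (indices `j + 1`, `j + 2` are taken mod 3).
  set e₁ : Fin 3 → K := Pi.single (j + 1) 1
  set e₂ : Fin 3 → K := Pi.single (j + 2) 1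
  set ℓ₁ : Fin 3 → K := e₁ - (v (j + 1) / v j) • Pi.single j 1
  set ℓ₂ : Fin 3 → K := e₂ - (v (j + 2) / v j) • Pi.single j 1
  have hdecomp : ∀ x, x + (-(x j / v j)) • v = (ℓ₁ ⬝ᵥ x) • e₁ + (ℓ₂ ⬝ᵥ x) • e₂ := by
    intro x
    ext i
    fin_cases j <;> simp only [Fin.zero_eta, Fin.mk_one, Fin.reduceFinMk] at hj <;>
      fin_cases i <;> simp [ℓ₁, ℓ₂, e₁, e₂, hj] <;> ring
  have hcoord : ∀ p q : K, (p • ℓ₁ + q • ℓ₂) (j + 1) = p ∧ (p • ℓ₁ + q • ℓ₂) (j + 2) = q := by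
    intro p q
    fin_cases j <;> simp [ℓ₁, ℓ₂, e₁, e₂]
  have heval : ∀ x, eval c x = eval c e₁ * (ℓ₁ ⬝ᵥ x) ^ 2 +
      e₁ ⬝ᵥ grad c e₂ * (ℓ₁ ⬝ᵥ x) * (ℓ₂ ⬝ᵥ x) + eval c e₂ * (ℓ₂ ⬝ᵥ x) ^ 2 := fun x => by
    rw [← htrans x (-(x j / v j)), hdecomp, eval_smul_add_smul]; ring
  have hne : ¬(eval c e₁ = 0 ∧ e₁ ⬝ᵥ grad c e₂ = 0 ∧ eval c e₂ = 0) := by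
    rintro ⟨h₁, h₁₂, h₂⟩
    exact hc (eq_zero_of_forall_eval_eq_zero fun x => by rw [heval, h₁, h₁₂, h₂]; ring)
  obtain ⟨p, q, r, s, hpq, hrs, hfac⟩ := exists_binary_quadratic_eq_mul hne
  have hne_zero : ∀ p q : K, ¬(p = 0 ∧ q = 0) → p • ℓ₁ + q • ℓ₂ ≠ 0 := by
    intro p q hpq h
    have := hcoord p q
    rw [h] at this
    exact hpq ⟨this.1.symm, this.2.symm⟩
  refine ⟨p • ℓ₁ + q • ℓ₂, r • ℓ₁ + s • ℓ₂, hne_zero p q hpq, hne_zero r s hrs, fun x => ?_⟩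
  rw [heval]
  simp only [add_dotProduct, smul_dotProduct, smul_eq_mul]
  linear_combination hfac (ℓ₁ ⬝ᵥ x) (ℓ₂ ⬝ᵥ x)

lemma exists_collinear3_of_isSingularPoint {ι : Type*} [Fintype ι] (hι : 4 < Fintype.card ι)
    {c : Fin 6 → K} (hc : c ≠ 0) {v : Fin 3 → K} (hv : IsSingularPoint c v)
    {A : ι → Fin 3 → K} (hA : ∀ m, eval c (A m) = 0) :
    ∃ i j l, i ≠ j ∧ i ≠ l ∧ j ≠ l ∧ Collinear3 (A i) (A j) (A l) := by
  classical
  obtain ⟨w₁, w₂, hw₁, hw₂, hfac⟩ := exists_eval_eq_mul_of_isSingularPoint hc hv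
  obtain ⟨y, hy⟩ := Fintype.exists_lt_card_fiber_of_mul_lt_card
    (fun m => decide (w₁ ⬝ᵥ A m = 0)) (n := 2) (by simpa using hι)
  obtain ⟨i, hi, j, hj, l, hl, hij, hil, hjl⟩ := Finset.two_lt_card.mp hy
  let w := if y then w₁ else w₂
  have hw : w ≠ 0 := by cases y <;> assumption
  have hline : ∀ m ∈ Finset.univ.filter (fun m => decide (w₁ ⬝ᵥ A m = 0) = y), w ⬝ᵥ A m = 0 := by
    intro m hm
    replace hm : decide (w₁ ⬝ᵥ A m = 0) = y := (Finset.mem_filter.mp hm).2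
    cases y
    · exact (mul_eq_zero.mp (hfac (A m) ▸ hA m)).resolve_left (by simpa using hm)
    · exact of_decide_eq_true hm
  exact ⟨i, j, l, hij, hil, hjl, collinear3_iff_exists_dotProduct_eq_zero.mpr
    ⟨w, hw, hline i hi, hline j hj, hline l hl⟩⟩

end IsAlgClosed

end PlaneConic

open PlaneConic in
/-- Five distinct points in the projective plane over a field lie in general position
(no three collinear) if and only if they lie on a smooth conic. -/
theorem five_points_general_position_iff_on_smooth_conic
    {k : Type*} [Field k] (P : Fin 5 → (Fin 3 → k))
    (h0 : ∀ i, P i ≠ 0)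
    (hdist : ∀ i j, i ≠ j → ∀ c : k, c • P i ≠ P j) :
    (∀ i j l : Fin 5, i ≠ j → i ≠ l → j ≠ l → ¬ Collinear3 (P i) (P j) (P l)) ↔
      ∃ Q : MvPolynomial (Fin 3) k, Q.IsHomogeneous 2 ∧ Q ≠ 0 ∧
        (∀ i, MvPolynomial.eval (P i) Q = 0) ∧ SmoothPlaneCurve Q := by
  constructor
  · intro hgen
    obtain ⟨c, hc, hcP⟩ := exists_ne_zero_forall_eval_eq_zero (by simp) P
    refine ⟨toMvPolynomial c, isHomogeneous_toMvPolynomial c, toMvPolynomial_ne_zero hc,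
      fun i => by rw [eval_toMvPolynomial, hcP], ?_⟩
    rw [smoothPlaneCurve_toMvPolynomial_iff]
    intro v hv
    let φ := algebraMap k (AlgebraicClosure k)
    obtain ⟨i, j, l, hij, hil, hjl, hcol⟩ :=
      exists_collinear3_of_isSingularPoint (A := fun m => φ ∘ P m) (by simp) (φ.comp_ne_zero hc)
        hv (fun m => by rw [eval_map, hcP, map_zero])
    exact hgen i j l hij hil hjl ((collinear3_map_iff φ).mp hcol)
  · rintro ⟨Q, hQ, -, hPQ, hsmooth⟩ i j l hij hil hjl hcol
    obtain ⟨c, rfl⟩ := exists_eq_toMvPolynomial hQ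
    simp only [eval_toMvPolynomial] at hPQ
    obtain ⟨v, hv⟩ := exists_isSingularPoint_of_collinear3 (h0 i) (hdist i j hij) (hdist i l hil)
      (hdist j l hjl) hcol (hPQ i) (hPQ j) (hPQ l)
    exact (smoothPlaneCurve_toMvPolynomial_iff c).mp hsmooth _ (hv.map _)
end

section
/- Let q ≥ 4 and let P_1,...,P_5 ∈ ℙ²(𝔽_q) be five points in general position, C the smooth conic through them, and 𝔏 the union of the ten lines through pairs of these points. Then the union 𝔠 = C ∪ 𝔏 has exactly 11q − 24 rational points over 𝔽_q. -/
/-- The set of rational points of `ℙ²` lying on one of the lines through two of the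
given points: a point lies on the line through `P i` and `P j` iff the determinant of
the matrix with rows `p.rep, P i, P j` vanishes. -/
def linesThrough {F : Type*} [Field F] {n : ℕ} (P : Fin n → (Fin 3 → F)) :
    Set (Projectivization F (Fin 3 → F)) :=
  {p | ∃ i j, i ≠ j ∧ (Matrix.of ![p.rep, P i, P j]).det = 0}

/-- The set of rational points of `ℙ²` lying on the conic `Q = 0`. -/
def conicPoints {F : Type*} [Field F] (Q : MvPolynomial (Fin 3) F) :
    Set (Projectivization F (Fin 3 → F)) :=
  {p | MvPolynomial.eval p.rep Q = 0}

/-!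
A smooth conic with a rational point `e` has `q + 1` rational points: in a frame `e, w, u` with
`w` on the tangent line at `e` and `u ⬝ᵥ ∇Q(e) = 1`, its equation reads `s r + Q(t w + r u) = 0`
in the coordinates `(s, t, r)`, so every point other than `[e]` has `r = 1` and `s` determined
by `t`.

A smooth conic contains no line, so each of the ten lines meets `C` exactly in its two defining
points and has `q - 1` points off `C`. Two lines through a common `P i` meet only at `P i ∈ C`;
two lines through four distinct points meet in one point, which is off `C` by general position.
Among any three of the ten index pairs two share an index, so no point off `C` lies on three of
the lines. Counting, for each point off `C`, the lines and the pairs of lines through it gives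
`|𝔏 \ C| = 10 (q - 1) - 15`, hence `|C ∪ 𝔏| = (q + 1) + 10 (q - 1) - 15 = 11 q - 24`.
-/

open Matrix MvPolynomial Set Submodule Projectivization
open scoped LinearAlgebra.Projectivization

namespace MvPolynomial

variable {σ R : Type*} [CommRing R]

noncomputable def grad (Q : MvPolynomial σ R) (x : σ → R) : σ → R :=
  fun i => eval x (pderiv i Q)

theorem grad_add (P Q : MvPolynomial σ R) (x : σ → R) :
    grad (P + Q) x = grad P x + grad Q x := by
  ext i
  simp [grad]

theorem grad_smul (c : R) (Q : MvPolynomial σ R) (x : σ → R) :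
    grad (c • Q) x = c • grad Q x := by
  ext i
  simp [grad]

theorem grad_mul (P Q : MvPolynomial σ R) (x : σ → R) :
    grad (P * Q) x = eval x Q • grad P x + eval x P • grad Q x := by
  ext i
  simp [grad, Derivation.leibniz]
  ring

theorem IsHomogeneous.eval_smul_add_smul_of_one {L : MvPolynomial σ R} (hL : L.IsHomogeneous 1)
    (s t : R) (x y : σ → R) : eval (s • x + t • y) L = s * eval x L + t * eval y L := by
  rw [← mem_homogeneousSubmodule, homogeneousSubmodule_one_eq_span_X] at hL
  induction hL using Submodule.span_induction with
  | mem _ h => obtain ⟨i, rfl⟩ := h; simp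
  | zero => simp
  | add P Q _ _ hP hQ => simp only [eval_add, hP, hQ]; ring
  | smul c P _ hP => simp only [smul_eval, hP]; ring

theorem IsHomogeneous.grad_smul_add_smul_of_two {Q : MvPolynomial σ R} (hQ : Q.IsHomogeneous 2)
    (s t : R) (x y : σ → R) : grad Q (s • x + t • y) = s • grad Q x + t • grad Q y := by
  ext i
  exact (hQ.pderiv (i := i)).eval_smul_add_smul_of_one s t x y

variable [Fintype σ]

theorem IsHomogeneous.dotProduct_grad_of_one {L : MvPolynomial σ R} (hL : L.IsHomogeneous 1)
    (x y : σ → R) : y ⬝ᵥ grad L x = eval y L := by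
  classical
  rw [← mem_homogeneousSubmodule, homogeneousSubmodule_one_eq_span_X] at hL
  induction hL using Submodule.span_induction with
  | mem _ h => obtain ⟨i, rfl⟩ := h; simp [grad, pderiv_X, Pi.single_apply, dotProduct]
  | zero => simp [grad, dotProduct]
  | add P Q _ _ hP hQ => rw [grad_add, dotProduct_add, hP, hQ, eval_add]
  | smul c P _ hP => rw [grad_smul, dotProduct_smul, hP, smul_eval, smul_eq_mul]

variable {Q : MvPolynomial σ R}

/-- A quadratic form is a sum of products of two linear forms, for which this is `ring`. -/
theorem IsHomogeneous.eval_smul_add_smul_of_two (hQ : Q.IsHomogeneous 2) (s t : R)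
    (x y : σ → R) :
    eval (s • x + t • y) Q = s ^ 2 * eval x Q + s * t * (y ⬝ᵥ grad Q x) + t ^ 2 * eval y Q := by
  rw [← mem_homogeneousSubmodule, ← homogeneousSubmodule_one_pow, pow_two] at hQ
  induction hQ using Submodule.mul_induction_on' with
  | mem_mul_mem L hL M hM =>
    rw [mem_homogeneousSubmodule] at hL hM
    simp only [eval_mul, grad_mul, dotProduct_add, dotProduct_smul, smul_eq_mul,
      hL.eval_smul_add_smul_of_one, hM.eval_smul_add_smul_of_one, hL.dotProduct_grad_of_one,
      hM.dotProduct_grad_of_one]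
    ring
  | add P _ Q _ hP hQ =>
    rw [eval_add, hP, hQ, grad_add, dotProduct_add, eval_add, eval_add]
    ring

theorem IsHomogeneous.eval_smul_of_two (hQ : Q.IsHomogeneous 2) (c : R) (x : σ → R) :
    eval (c • x) Q = c ^ 2 * eval x Q := by
  simpa using hQ.eval_smul_add_smul_of_two c 0 x x

theorem IsHomogeneous.dotProduct_grad_comm_of_two (hQ : Q.IsHomogeneous 2) (x y : σ → R) :
    y ⬝ᵥ grad Q x = x ⬝ᵥ grad Q y := by
  have h := hQ.eval_smul_add_smul_of_two 1 1 x y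
  rw [add_comm, hQ.eval_smul_add_smul_of_two] at h
  linear_combination -h

theorem IsHomogeneous.dotProduct_grad_self_of_two (hQ : Q.IsHomogeneous 2) (x : σ → R) :
    x ⬝ᵥ grad Q x = 2 * eval x Q := by
  simpa [dotProduct, grad, map_sum, mul_comm] using congrArg (eval x) hQ.sum_X_mul_pderiv

end MvPolynomial

section CrossProduct

variable {F : Type*} [Field F] {u v w x : Fin 3 → F}

theorem left_ne_zero_of_cross_ne_zero (h : u ⨯₃ v ≠ 0) : u ≠ 0 := by
  rintro rfl
  simp at h

theorem right_ne_zero_of_cross_ne_zero (h : u ⨯₃ v ≠ 0) : v ≠ 0 := by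
  rintro rfl
  simp at h

theorem left_ne_zero_of_triple_product_ne_zero (h : u ⬝ᵥ v ⨯₃ w ≠ 0) : u ≠ 0 := by
  rintro rfl
  simp at h

theorem exists_smul_eq_of_cross_eq_zero (hv : v ≠ 0) (h : v ⨯₃ w = 0) : ∃ c : F, c • v = w := by
  by_contra! hc
  exact crossProduct_ne_zero_iff_linearIndependent.2 ((LinearIndependent.pair_iff' hv).2 hc) h

theorem exists_smul_cross_eq (huv : u ⨯₃ v ≠ 0) (hu : u ⬝ᵥ x = 0) (hv : v ⬝ᵥ x = 0) :
    ∃ c : F, c • u ⨯₃ v = x :=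
  exists_smul_eq_of_cross_eq_zero huv (by simp [cross_cross_eq_smul_sub_smul, hu, hv])

theorem cross_ne_zero_of_dotProduct (hu : x ⬝ᵥ u = 0) (hv : x ⬝ᵥ v ≠ 0) (hu0 : u ≠ 0) :
    u ⨯₃ v ≠ 0 := by
  intro h
  obtain ⟨c, rfl⟩ := exists_smul_eq_of_cross_eq_zero hu0 h
  rw [dotProduct_smul, hu, smul_zero] at hv
  exact hv rfl

theorem linearIndependent_iff_triple_product_ne_zero :
    LinearIndependent F ![u, v, w] ↔ u ⬝ᵥ v ⨯₃ w ≠ 0 := by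
  rw [triple_product_eq_det, ← isUnit_iff_ne_zero]
  exact (linearIndependent_rows_iff_isUnit (A := of ![u, v, w])).trans (isUnit_iff_isUnit_det _)

theorem collinear3_of_triple_product_eq_zero (h : u ⬝ᵥ v ⨯₃ w = 0) : Collinear3 u v w := by
  have hspan : span F (range ![u, v, w]) < ⊤ := by
    refine lt_top_iff_ne_top.2 fun htop => linearIndependent_iff_triple_product_ne_zero.1 ?_ h
    exact linearIndependent_of_top_le_span_of_card_eq_finrank htop.ge (by simp)
  obtain ⟨f, hf, hker⟩ := exists_le_ker_of_lt_top _ hspan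
  exact ⟨f, hf, hker (subset_span ⟨0, rfl⟩), hker (subset_span ⟨1, rfl⟩),
    hker (subset_span ⟨2, rfl⟩)⟩

theorem exists_smul_add_smul_eq (huv : u ⨯₃ v ≠ 0) (h : x ⬝ᵥ u ⨯₃ v = 0) :
    ∃ a b : F, a • u + b • v = x := by
  have hx : x ∈ span F (range ![u, v]) := by
    by_contra hx
    exact linearIndependent_iff_triple_product_ne_zero.1
      (linearIndependent_finCons.2 ⟨crossProduct_ne_zero_iff_linearIndependent.1 huv, hx⟩) h
  rwa [range_cons, range_cons, range_empty, union_empty, singleton_union, mem_span_pair] at hx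

theorem exists_smul_add_smul_add_smul_eq (h : u ⬝ᵥ v ⨯₃ w ≠ 0) (x : Fin 3 → F) :
    ∃ a b c : F, a • u + b • v + c • w = x := by
  have hspan := (linearIndependent_iff_triple_product_ne_zero.2 h).span_eq_top_of_card_eq_finrank
    (by simp)
  obtain ⟨f, hf⟩ := (mem_span_range_iff_exists_fun F).1 (hspan ▸ mem_top (x := x))
  exact ⟨f 0, f 1, f 2, by simpa [Fin.sum_univ_three] using hf⟩

theorem eq_zero_of_smul_add_smul_add_smul_eq_zero (h : u ⬝ᵥ v ⨯₃ w ≠ 0) {a b c : F}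
    (habc : a • u + b • v + c • w = 0) : a = 0 ∧ b = 0 ∧ c = 0 := by
  have hli : LinearIndependent F ![u, v, w] := linearIndependent_iff_triple_product_ne_zero.2 h
  have hsum : ∑ i, ![a, b, c] i • ![u, v, w] i = 0 := by
    rw [Fin.sum_univ_three]
    exact habc
  have := Fintype.linearIndependent_iff.1 hli _ hsum
  exact ⟨this 0, this 1, this 2⟩

end CrossProduct

section SmoothConic

variable {F : Type*} [Field F] {Q : MvPolynomial (Fin 3) F}

theorem SmoothPlaneCurve.grad_ne_zero (hQs : SmoothPlaneCurve Q) {v : Fin 3 → F} (hv : v ≠ 0)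
    (hQv : eval v Q = 0) : grad Q v ≠ 0 := by
  have hinj := (algebraMap F (AlgebraicClosure F)).injective
  have hbase (P : MvPolynomial (Fin 3) F) :
      aeval (algebraMap F (AlgebraicClosure F) ∘ v) P = 0 ↔ eval v P = 0 := by
    rw [aeval_algebraMap_eq_zero_iff_of_injective (h := hinj)]
    rfl
  obtain ⟨i, hi⟩ := hQs (algebraMap F (AlgebraicClosure F) ∘ v)
    (fun h => hv (funext fun j => hinj (by simpa using congrFun h j))) ((hbase Q).2 hQv)
  exact fun h => hi ((hbase _).2 (congrFun h i))

/-- If `Q` vanished on the line through `x` and `y`, both gradients would be multiples `a`, `b`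
of `x ⨯₃ y`, and `b • x - a • y` would be a singular point of the conic. -/
theorem SmoothPlaneCurve.dotProduct_grad_ne_zero (hQs : SmoothPlaneCurve Q)
    (hQ : Q.IsHomogeneous 2) {x y : Fin 3 → F} (hxy : x ⨯₃ y ≠ 0) (hx : eval x Q = 0)
    (hy : eval y Q = 0) : y ⬝ᵥ grad Q x ≠ 0 := by
  intro hB
  obtain ⟨a, ha⟩ : ∃ a : F, a • x ⨯₃ y = grad Q x :=
    exists_smul_cross_eq hxy (by rw [hQ.dotProduct_grad_self_of_two, hx, mul_zero]) hB
  obtain ⟨b, hb⟩ : ∃ b : F, b • x ⨯₃ y = grad Q y :=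
    exists_smul_cross_eq hxy (by rw [← hQ.dotProduct_grad_comm_of_two, hB])
      (by rw [hQ.dotProduct_grad_self_of_two, hy, mul_zero])
  have ha0 : a ≠ 0 := by
    rintro rfl
    exact hQs.grad_ne_zero (left_ne_zero_of_cross_ne_zero hxy) hx (by rw [← ha, zero_smul])
  refine hQs.grad_ne_zero (v := b • x + (-a) • y) (fun h => ?_) ?_ ?_
  · have hli : LinearIndependent F ![x, y] := crossProduct_ne_zero_iff_linearIndependent.1 hxy
    exact ha0 (neg_eq_zero.1 (LinearIndependent.pair_iff.1 hli b (-a) h).2)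
  · rw [hQ.eval_smul_add_smul_of_two, hx, hy, hB]
    ring
  · rw [hQ.grad_smul_add_smul_of_two, ← ha, ← hb, smul_smul, smul_smul, ← add_smul]
    simp [mul_comm]

end SmoothConic

namespace Projectivization

theorem mk_eq_of_smul_eq_rep {K V : Type*} [DivisionRing K] [AddCommGroup V] [Module K V]
    {v : V} (hv : v ≠ 0) {p : ℙ K V} {c : K} (h : c • v = p.rep) : mk K v hv = p := by
  conv_rhs => rw [← mk_rep p]
  exact ((mk_eq_mk_iff' K _ _ p.rep_nonzero hv).2 ⟨c, h⟩).symm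

theorem ncard_setOf_rep_mem {K V : Type*} [Field K] [AddCommGroup V] [Module K V] [Finite K]
    (W : Submodule K V) (hW : Module.finrank K W = 2) :
    {p : ℙ K V | p.rep ∈ W}.ncard = Nat.card K + 1 := by
  have hrange : range (map W.subtype W.injective_subtype) = {p | p.rep ∈ W} := by
    ext p
    constructor
    · rintro ⟨p', rfl⟩
      induction p' using Projectivization.ind with | h v hv => ?_
      rw [map_mk]
      obtain ⟨a, ha⟩ := exists_smul_eq_mk_rep K (W.subtype v) (by simpa using hv)
      rw [mem_ofPred_eq, ← ha]
      exact W.smul_of_tower_mem _ (coe_mem _)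
    · intro hp
      refine ⟨mk K ⟨p.rep, hp⟩ (by simpa using p.rep_nonzero), ?_⟩
      rw [map_mk]
      exact mk_rep p
  rw [← hrange, ncard_range_of_injective (map_injective _ _), card_of_finrank_two K W hW]

end Projectivization

section ProjectivePlane

variable {F : Type*} [Field F] {Q : MvPolynomial (Fin 3) F}

def lineWithNormal (n : Fin 3 → F) : Set (ℙ F (Fin 3 → F)) :=
  {p | p.rep ⬝ᵥ n = 0}

theorem mk_mem_lineWithNormal {v : Fin 3 → F} (hv : v ≠ 0) (n : Fin 3 → F) :
    mk F v hv ∈ lineWithNormal n ↔ v ⬝ᵥ n = 0 := by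
  obtain ⟨a, ha⟩ := exists_smul_eq_mk_rep F v hv
  simp [lineWithNormal, ← ha, Units.smul_def, smul_dotProduct]

theorem mk_mem_conicPoints (hQ : Q.IsHomogeneous 2) {v : Fin 3 → F} (hv : v ≠ 0) :
    mk F v hv ∈ conicPoints Q ↔ eval v Q = 0 := by
  obtain ⟨a, ha⟩ := exists_smul_eq_mk_rep F v hv
  simp [conicPoints, ← ha, Units.smul_def, hQ.eval_smul_of_two]

theorem lineWithNormal_cross_comm (a b : Fin 3 → F) :
    lineWithNormal (a ⨯₃ b) = lineWithNormal (b ⨯₃ a) := by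
  ext p
  change _ = 0 ↔ _ = 0
  rw [← cross_anticomm, dotProduct_neg, neg_eq_zero]

theorem ncard_lineWithNormal [Finite F] {n : Fin 3 → F} (hn : n ≠ 0) :
    (lineWithNormal n).ncard = Nat.card F + 1 := by
  let f : Module.Dual F (Fin 3 → F) := dotProductEquiv F (Fin 3) n
  have hf : f ≠ 0 := (LinearEquiv.map_ne_zero_iff _).2 hn
  have hline : lineWithNormal n = {p | p.rep ∈ LinearMap.ker f} := by
    ext p
    simp [lineWithNormal, f, dotProduct_comm]
  have hker := Module.Dual.finrank_ker_add_one_of_ne_zero hf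
  rw [Module.finrank_fin_fun] at hker
  rw [hline, ncard_setOf_rep_mem _ (by omega)]

theorem lineWithNormal_inter_lineWithNormal {n m : Fin 3 → F} (hnm : n ⨯₃ m ≠ 0) :
    lineWithNormal n ∩ lineWithNormal m = {mk F (n ⨯₃ m) hnm} := by
  ext p
  rw [mem_singleton_iff]
  constructor
  · rintro ⟨hn, hm⟩
    obtain ⟨c, hc⟩ :=
      exists_smul_cross_eq hnm (by rwa [dotProduct_comm]) (by rwa [dotProduct_comm])
    exact (mk_eq_of_smul_eq_rep hnm hc).symm
  · rintro rfl
    simp only [mem_inter_iff, mk_mem_lineWithNormal]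
    rw [dotProduct_comm, dot_self_cross, dotProduct_comm, dot_cross_self]
    simp

theorem lineWithNormal_diff_inter_eq_empty {n m : Fin 3 → F} (hnm : n ⨯₃ m ≠ 0)
    {p : ℙ F (Fin 3 → F)} (hn : p ∈ lineWithNormal n) (hm : p ∈ lineWithNormal m)
    (hp : p ∈ conicPoints Q) :
    (lineWithNormal n \ conicPoints Q) ∩ (lineWithNormal m \ conicPoints Q) = ∅ := by
  have hpt (q) (hq : q ∈ lineWithNormal n ∩ lineWithNormal m) : q = mk F _ hnm := by
    rwa [lineWithNormal_inter_lineWithNormal hnm] at hq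
  refine eq_empty_iff_forall_notMem.2 fun q ⟨⟨hqn, hqC⟩, hqm, _⟩ => hqC ?_
  rwa [hpt q ⟨hqn, hqm⟩, ← hpt p ⟨hn, hm⟩]

theorem mem_linesThrough_iff {n : ℕ} {P : Fin n → Fin 3 → F} {p : ℙ F (Fin 3 → F)} :
    p ∈ linesThrough P ↔ ∃ i j, i < j ∧ p ∈ lineWithNormal (P i ⨯₃ P j) := by
  have hdet (i j : Fin n) :
      (Matrix.of ![p.rep, P i, P j]).det = 0 ↔ p ∈ lineWithNormal (P i ⨯₃ P j) := by
    rw [lineWithNormal, mem_ofPred_eq, triple_product_eq_det]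
    rfl
  simp only [linesThrough, mem_ofPred_eq, hdet]
  constructor
  · rintro ⟨i, j, hij, h⟩
    rcases hij.lt_or_gt with hlt | hlt
    · exact ⟨i, j, hlt, h⟩
    · exact ⟨j, i, hlt, lineWithNormal_cross_comm (P i) (P j) ▸ h⟩
  · rintro ⟨i, j, hlt, h⟩
    exact ⟨i, j, hlt.ne, h⟩

end ProjectivePlane

section LinesAndConic

variable {F : Type*} [Field F] {Q : MvPolynomial (Fin 3) F} (hQs : SmoothPlaneCurve Q)
  (hQ : Q.IsHomogeneous 2)
include hQs hQ

theorem SmoothPlaneCurve.lineWithNormal_cross_inter_conicPoints {a b : Fin 3 → F}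
    (hab : a ⨯₃ b ≠ 0) (ha : eval a Q = 0) (hb : eval b Q = 0) :
    lineWithNormal (a ⨯₃ b) ∩ conicPoints Q =
      {mk F a (left_ne_zero_of_cross_ne_zero hab),
        mk F b (right_ne_zero_of_cross_ne_zero hab)} := by
  ext p
  constructor
  · rintro ⟨hl, hc⟩
    obtain ⟨s, t, hst⟩ := exists_smul_add_smul_eq hab hl
    have hQp : eval p.rep Q = 0 := hc
    rw [← hst, hQ.eval_smul_add_smul_of_two, ha, hb] at hQp
    have hst0 : s * t = 0 := by
      refine (mul_eq_zero.1 ?_).resolve_right (hQs.dotProduct_grad_ne_zero hQ hab ha hb)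
      linear_combination hQp
    rcases mul_eq_zero.1 hst0 with rfl | rfl
    · exact Or.inr (mk_eq_of_smul_eq_rep _ (by simpa using hst)).symm
    · exact Or.inl (mk_eq_of_smul_eq_rep _ (by simpa using hst)).symm
  · rintro (rfl | rfl)
    · exact ⟨(mk_mem_lineWithNormal _ _).2 (dot_self_cross _ _), (mk_mem_conicPoints hQ _).2 ha⟩
    · exact ⟨(mk_mem_lineWithNormal _ _).2 (dot_cross_self _ _), (mk_mem_conicPoints hQ _).2 hb⟩

theorem SmoothPlaneCurve.ncard_lineWithNormal_cross_diff [Finite F] {a b : Fin 3 → F}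
    (hab : a ⨯₃ b ≠ 0) (ha : eval a Q = 0) (hb : eval b Q = 0) :
    (lineWithNormal (a ⨯₃ b) \ conicPoints Q).ncard = Nat.card F - 1 := by
  have hne : mk F a (left_ne_zero_of_cross_ne_zero hab) ≠
      mk F b (right_ne_zero_of_cross_ne_zero hab) := by
    intro h
    obtain ⟨c, rfl⟩ := (mk_eq_mk_iff' F _ _ _ _).1 h
    simp at hab
  have h := ncard_inter_add_ncard_sdiff_eq_ncard (lineWithNormal (a ⨯₃ b)) (conicPoints Q)
  rw [hQs.lineWithNormal_cross_inter_conicPoints hQ hab ha hb, ncard_pair hne,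
    ncard_lineWithNormal hab] at h
  omega

theorem SmoothPlaneCurve.ncard_lineWithNormal_cross_diff_inter {a b m : Fin 3 → F}
    (hab : a ⨯₃ b ≠ 0) (ha : eval a Q = 0) (hb : eval b Q = 0) (ham : a ⬝ᵥ m ≠ 0)
    (hbm : b ⬝ᵥ m ≠ 0) :
    ((lineWithNormal (a ⨯₃ b) \ conicPoints Q) ∩ (lineWithNormal m \ conicPoints Q)).ncard = 1 := by
  have hnm : a ⨯₃ b ⨯₃ m ≠ 0 := cross_ne_zero_of_dotProduct (dot_self_cross a b) ham hab
  have hoff (q) (hq : q ∈ lineWithNormal (a ⨯₃ b) ∩ lineWithNormal m) : q ∉ conicPoints Q := by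
    intro hqC
    have hq' : q ∈ lineWithNormal (a ⨯₃ b) ∩ conicPoints Q := ⟨hq.1, hqC⟩
    rw [hQs.lineWithNormal_cross_inter_conicPoints hQ hab ha hb] at hq'
    rcases hq' with rfl | rfl
    · exact ham ((mk_mem_lineWithNormal _ _).1 hq.2)
    · exact hbm ((mk_mem_lineWithNormal _ _).1 hq.2)
  have hset : (lineWithNormal (a ⨯₃ b) \ conicPoints Q) ∩ (lineWithNormal m \ conicPoints Q) =
      lineWithNormal (a ⨯₃ b) ∩ lineWithNormal m := by
    ext q
    exact ⟨fun ⟨⟨h1, _⟩, h2, _⟩ => ⟨h1, h2⟩, fun hq => ⟨⟨hq.1, hoff q hq⟩, hq.2, hoff q hq⟩⟩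
  rw [hset, lineWithNormal_inter_lineWithNormal hnm, ncard_singleton]

end LinesAndConic

section ConicParametrization

variable {F : Type*} [Field F] {Q : MvPolynomial (Fin 3) F} {e w u : Fin 3 → F}

theorem eval_smul_add_of_eval_eq_zero (hQ : Q.IsHomogeneous 2) (he : eval e Q = 0) (s : F)
    (x : Fin 3 → F) : eval (s • e + x) Q = s * (x ⬝ᵥ grad Q e) + eval x Q := by
  simpa [he] using hQ.eval_smul_add_smul_of_two s 1 e x

variable (Q e w u) in
/-- When `Q e = 0`, `w ⬝ᵥ ∇Q(e) = 0` and `u ⬝ᵥ ∇Q(e) = 1`, the point `s • e + t • w + u` lies on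
`Q = 0` iff `s + Q(t • w + u) = 0`, by `eval_smul_add_of_eval_eq_zero`. -/
noncomputable def conicParam (t : F) : Fin 3 → F :=
  -eval (t • w + u) Q • e + t • w + u

theorem conicParam_ne_zero (hT : e ⬝ᵥ w ⨯₃ u ≠ 0) (t : F) : conicParam Q e w u t ≠ 0 := fun h =>
  one_ne_zero (eq_zero_of_smul_add_smul_add_smul_eq_zero hT (a := -eval (t • w + u) Q) (b := t)
    (c := 1) (by rw [one_smul]; exact h)).2.2

variable (hT : e ⬝ᵥ w ⨯₃ u ≠ 0)
include hT

theorem mk_conicParam_injective :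
    Function.Injective fun t => mk F (conicParam Q e w u t) (conicParam_ne_zero hT t) := by
  intro t t' h
  obtain ⟨c, hc⟩ := (mk_eq_mk_iff' F _ _ _ _).1 h
  have h0 : (eval (t • w + u) Q - c * eval (t' • w + u) Q) • e + (c * t' - t) • w +
      (c - 1) • u = 0 := by
    unfold conicParam at hc
    linear_combination (norm := module) hc
  obtain ⟨-, hb, hc1⟩ := eq_zero_of_smul_add_smul_add_smul_eq_zero hT h0
  linear_combination -hb + t' * hc1

theorem mk_ne_mk_conicParam (t : F) :
    mk F e (left_ne_zero_of_triple_product_ne_zero hT) ≠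
      mk F (conicParam Q e w u t) (conicParam_ne_zero hT t) := by
  intro h
  obtain ⟨c, hc⟩ := (mk_eq_mk_iff' F _ _ _ _).1 h
  have h0 : (c * -eval (t • w + u) Q - 1) • e + (c * t) • w + c • u = 0 := by
    unfold conicParam at hc
    linear_combination (norm := module) hc
  obtain ⟨h1, -, rfl⟩ := eq_zero_of_smul_add_smul_add_smul_eq_zero hT h0
  simp at h1

theorem conicPoints_eq_insert_range (hQ : Q.IsHomogeneous 2) (he : eval e Q = 0)
    (hw : w ⬝ᵥ grad Q e = 0) (hu : u ⬝ᵥ grad Q e = 1) (hQw : eval w Q ≠ 0) :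
    conicPoints Q = insert (mk F e (left_ne_zero_of_triple_product_ne_zero hT))
      (range fun t => mk F (conicParam Q e w u t) (conicParam_ne_zero hT t)) := by
  have hlin (t : F) : (t • w + u) ⬝ᵥ grad Q e = 1 := by
    simp [add_dotProduct, smul_dotProduct, hw, hu]
  ext p
  simp only [mem_insert_iff, mem_range]
  constructor
  · intro hp
    obtain ⟨a, b, c, habc⟩ := exists_smul_add_smul_add_smul_eq hT p.rep
    have hQp : eval p.rep Q = 0 := hp
    by_cases hc : c = 0
    · subst hc
      rw [← habc, zero_smul, add_zero, eval_smul_add_of_eval_eq_zero hQ he, smul_dotProduct, hw,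
        hQ.eval_smul_of_two] at hQp
      have hb : b = 0 := by simpa [hQw] using hQp
      exact Or.inl (mk_eq_of_smul_eq_rep _ (by simpa [hb] using habc)).symm
    · have hscale : a • e + b • w + c • u = a • e + c • ((b / c) • w + u) := by
        rw [smul_add, smul_smul, mul_div_cancel₀ _ hc, add_assoc]
      rw [← habc, hscale, eval_smul_add_of_eval_eq_zero hQ he, smul_dotProduct, hlin,
        smul_eq_mul, hQ.eval_smul_of_two] at hQp
      have ha : a = c * -eval ((b / c) • w + u) Q :=
        mul_left_cancel₀ hc (by linear_combination hQp)
      refine Or.inr ⟨b / c, mk_eq_of_smul_eq_rep (c := c) _ ?_⟩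
      rw [← habc, hscale, conicParam, ha, add_assoc, smul_add, smul_smul]
  · rintro (rfl | ⟨t, rfl⟩)
    · exact (mk_mem_conicPoints hQ _).2 he
    · rw [mk_mem_conicPoints hQ, conicParam, add_assoc, eval_smul_add_of_eval_eq_zero hQ he, hlin]
      ring

end ConicParametrization

theorem SmoothPlaneCurve.ncard_conicPoints {F : Type*} [Field F] [Finite F]
    {Q : MvPolynomial (Fin 3) F} (hQs : SmoothPlaneCurve Q) (hQ : Q.IsHomogeneous 2)
    {e : Fin 3 → F} (he0 : e ≠ 0) (he : eval e Q = 0) :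
    (conicPoints Q).ncard = Nat.card F + 1 := by
  have hγ : grad Q e ≠ 0 := hQs.grad_ne_zero he0 he
  have heγ : e ⬝ᵥ grad Q e = 0 := by rw [hQ.dotProduct_grad_self_of_two, he, mul_zero]
  obtain ⟨p, hw, hpe⟩ := exists_ne_of_one_lt_ncard (s := lineWithNormal (grad Q e))
    (by rw [ncard_lineWithNormal hγ]; linarith [Finite.one_lt_card (α := F)]) (mk F e he0)
  have hew : e ⨯₃ p.rep ≠ 0 := fun h => by
    obtain ⟨c, hc⟩ := exists_smul_eq_of_cross_eq_zero he0 h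
    exact hpe (mk_eq_of_smul_eq_rep he0 hc).symm
  have hQw : eval p.rep Q ≠ 0 := fun h => hQs.dotProduct_grad_ne_zero hQ hew he h hw
  obtain ⟨i, hi⟩ := Function.ne_iff.1 hγ
  have hu : Pi.single i (grad Q e i)⁻¹ ⬝ᵥ grad Q e = 1 := by
    simp [single_dotProduct, inv_mul_cancel₀ hi]
  have hT : e ⬝ᵥ p.rep ⨯₃ Pi.single i (grad Q e i)⁻¹ ≠ 0 := by
    obtain ⟨c, hc⟩ := exists_smul_cross_eq hew heγ hw
    rw [← triple_product_permutation]
    intro h0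
    have := congrArg (Pi.single i (grad Q e i)⁻¹ ⬝ᵥ ·) hc
    rw [dotProduct_smul, h0, smul_zero, hu] at this
    exact zero_ne_one this
  rw [conicPoints_eq_insert_range hT hQ he hw hu hQw,
    ncard_insert_of_notMem (by rintro ⟨t, ht⟩; exact mk_ne_mk_conicParam hT t ht.symm),
    ncard_range_of_injective (mk_conicParam_injective hT)]

open Finset

theorem Finset.two_mul_card_biUnion_add_sum_card_inter {ι α : Type*} [DecidableEq ι]
    [DecidableEq α] (s : Finset ι) (A : ι → Finset α) (h : ∀ x, #{i ∈ s | x ∈ A i} ≤ 2) :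
    2 * #(s.biUnion A) + ∑ ij ∈ s.offDiag, #(A ij.1 ∩ A ij.2) = 2 * ∑ i ∈ s, #(A i) := by
  set U := s.biUnion A
  have hsingles : ∑ i ∈ s, #(A i) = ∑ x ∈ U, #{i ∈ s | x ∈ A i} := by
    refine (sum_congr rfl fun i hi => ?_).trans
      (sum_card_bipartiteAbove_eq_sum_card_bipartiteBelow (fun i x => x ∈ A i))
    rw [bipartiteAbove, filter_mem_eq_inter, inter_eq_right.2 (subset_biUnion_of_mem A hi)]
  have hpairs :
      ∑ ij ∈ s.offDiag, #(A ij.1 ∩ A ij.2) = ∑ x ∈ U, #{i ∈ s | x ∈ A i}.offDiag := by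
    refine (sum_congr rfl fun ij hij => ?_).trans
      ((sum_card_bipartiteAbove_eq_sum_card_bipartiteBelow
        (fun (ij : ι × ι) x => x ∈ A ij.1 ∧ x ∈ A ij.2)).trans (sum_congr rfl fun x _ => ?_))
    · congr 1
      ext x
      simp only [bipartiteAbove, mem_filter, mem_inter, U, mem_biUnion]
      exact ⟨fun h => ⟨⟨ij.1, (mem_offDiag.1 hij).1, h.1⟩, h⟩, fun h => h.2⟩
    · congr 1
      ext ij
      simp only [bipartiteBelow, mem_filter, mem_offDiag]
      tauto
  rw [hsingles, hpairs, mul_sum, card_eq_sum_ones U, mul_sum, ← sum_add_distrib]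
  refine sum_congr rfl fun x hx => ?_
  obtain ⟨i, hi, hxi⟩ := mem_biUnion.1 hx
  have hpos : 0 < #{i ∈ s | x ∈ A i} := card_pos.2 ⟨i, mem_filter.2 ⟨hi, hxi⟩⟩
  have h2 := h x
  rw [offDiag_card]
  interval_cases #{i ∈ s | x ∈ A i} <;> rfl

def increasingPairs : Finset (Fin 5 × Fin 5) :=
  {z | z.1 < z.2}

def SharesEntry {ι : Type*} (z w : ι × ι) : Prop :=
  z.1 = w.1 ∨ z.1 = w.2 ∨ z.2 = w.1 ∨ z.2 = w.2

instance {ι : Type*} [DecidableEq ι] (z w : ι × ι) : Decidable (SharesEntry z w) := by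
  unfold SharesEntry
  infer_instance

theorem mem_increasingPairs {z : Fin 5 × Fin 5} : z ∈ increasingPairs ↔ z.1 < z.2 := by
  simp [increasingPairs]

theorem card_increasingPairs : #increasingPairs = 10 := by
  decide

theorem card_filter_not_sharesEntry :
    #{zw ∈ increasingPairs.offDiag | ¬SharesEntry zw.1 zw.2} = 30 := by
  decide

theorem exists_entry_not_mem_of_ne : ∀ z ∈ increasingPairs, ∀ w ∈ increasingPairs, z ≠ w →
    ∃ k, (k = w.1 ∨ k = w.2) ∧ k ≠ z.1 ∧ k ≠ z.2 := by
  decide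

theorem sharesEntry_of_three_ne :
    ∀ z ∈ increasingPairs, ∀ w ∈ increasingPairs, ∀ v ∈ increasingPairs,
      z ≠ w → z ≠ v → w ≠ v → SharesEntry z w ∨ SharesEntry z v ∨ SharesEntry w v := by
  decide

section FivePoints

variable {F : Type*} [Field F]

theorem dotProduct_cross_eq_zero_of_eq_or_eq {ι : Type*} (P : ι → Fin 3 → F) {a i j : ι}
    (h : a = i ∨ a = j) : P a ⬝ᵥ P i ⨯₃ P j = 0 := by
  rcases h with rfl | rfl
  · exact dot_self_cross _ _
  · exact dot_cross_self _ _

def lineOffConic {ι : Type*} (P : ι → Fin 3 → F) (Q : MvPolynomial (Fin 3) F) (z : ι × ι) :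
    Set (ℙ F (Fin 3 → F)) :=
  lineWithNormal (P z.1 ⨯₃ P z.2) \ conicPoints Q

variable {P : Fin 5 → Fin 3 → F} (hP : ∀ i j k, i ≠ j → i ≠ k → j ≠ k → P i ⬝ᵥ P j ⨯₃ P k ≠ 0)
include hP

theorem cross_ne_zero_of_generalPosition {i j : Fin 5} (hij : i ≠ j) : P i ⨯₃ P j ≠ 0 := by
  obtain ⟨k, hki, hkj⟩ : ∃ k, k ≠ i ∧ k ≠ j := by
    revert i j
    decide
  intro h
  exact hP k i j hki hkj hij (by rw [h, dotProduct_zero])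

theorem ne_zero_of_generalPosition (i : Fin 5) : P i ≠ 0 := by
  obtain ⟨j, hj⟩ : ∃ j, j ≠ i := by
    revert i
    decide
  exact left_ne_zero_of_cross_ne_zero (cross_ne_zero_of_generalPosition hP hj.symm)

variable {Q : MvPolynomial (Fin 3) F} (hQ : Q.IsHomogeneous 2) (hPQ : ∀ i, eval (P i) Q = 0)
include hQ hPQ

theorem lineOffConic_inter_eq_empty {z w : Fin 5 × Fin 5} (hz : z ∈ increasingPairs)
    (hw : w ∈ increasingPairs) (hzw : z ≠ w) (hsh : SharesEntry z w) :
    lineOffConic P Q z ∩ lineOffConic P Q w = ∅ := by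
  obtain ⟨k, hkw, hkz1, hkz2⟩ := exists_entry_not_mem_of_ne z hz w hw hzw
  have hnm : P w.1 ⨯₃ P w.2 ⨯₃ (P z.1 ⨯₃ P z.2) ≠ 0 :=
    cross_ne_zero_of_dotProduct (dotProduct_cross_eq_zero_of_eq_or_eq P hkw)
      (hP k z.1 z.2 hkz1 hkz2 (mem_increasingPairs.1 hz).ne)
      (cross_ne_zero_of_generalPosition hP (mem_increasingPairs.1 hw).ne)
  obtain ⟨a, haz, haw⟩ : ∃ a, (a = z.1 ∨ a = z.2) ∧ (a = w.1 ∨ a = w.2) := by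
    rcases hsh with h | h | h | h
    exacts [⟨_, .inl rfl, .inl h⟩, ⟨_, .inl rfl, .inr h⟩, ⟨_, .inr rfl, .inl h⟩,
      ⟨_, .inr rfl, .inr h⟩]
  rw [Set.inter_comm]
  exact lineWithNormal_diff_inter_eq_empty hnm
    ((mk_mem_lineWithNormal (ne_zero_of_generalPosition hP a) _).2
      (dotProduct_cross_eq_zero_of_eq_or_eq P haw))
    ((mk_mem_lineWithNormal _ _).2 (dotProduct_cross_eq_zero_of_eq_or_eq P haz))
    ((mk_mem_conicPoints hQ _).2 (hPQ a))

open Classical in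
theorem card_filter_mem_lineOffConic_le_two (x : ℙ F (Fin 3 → F)) :
    #{z ∈ increasingPairs | x ∈ lineOffConic P Q z} ≤ 2 := by
  by_contra! h
  obtain ⟨z, hz, w, hw, v, hv, hzw, hzv, hwv⟩ := two_lt_card.1 h
  rw [mem_filter] at hz hw hv
  have hdisj {z w} (hz : z ∈ increasingPairs) (hw : w ∈ increasingPairs) (hzw : z ≠ w)
      (hxz : x ∈ lineOffConic P Q z) (hxw : x ∈ lineOffConic P Q w) : ¬SharesEntry z w :=
    fun hsh => (lineOffConic_inter_eq_empty hP hQ hPQ hz hw hzw hsh).subset ⟨hxz, hxw⟩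
  rcases sharesEntry_of_three_ne z hz.1 w hw.1 v hv.1 hzw hzv hwv with h | h | h
  exacts [hdisj hz.1 hw.1 hzw hz.2 hw.2 h, hdisj hz.1 hv.1 hzv hz.2 hv.2 h,
    hdisj hw.1 hv.1 hwv hw.2 hv.2 h]

variable (hQs : SmoothPlaneCurve Q)
include hQs

theorem ncard_lineOffConic [Finite F] {z : Fin 5 × Fin 5} (hz : z ∈ increasingPairs) :
    (lineOffConic P Q z).ncard = Nat.card F - 1 :=
  hQs.ncard_lineWithNormal_cross_diff hQ
    (cross_ne_zero_of_generalPosition hP (mem_increasingPairs.1 hz).ne) (hPQ _) (hPQ _)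

theorem ncard_lineOffConic_inter_of_not_sharesEntry {z w : Fin 5 × Fin 5}
    (hz : z ∈ increasingPairs) (hw : w ∈ increasingPairs) (hsh : ¬SharesEntry z w) :
    (lineOffConic P Q z ∩ lineOffConic P Q w).ncard = 1 := by
  simp only [SharesEntry, not_or] at hsh
  obtain ⟨h11, h12, h21, h22⟩ := hsh
  have hw' := (mem_increasingPairs.1 hw).ne
  exact hQs.ncard_lineWithNormal_cross_diff_inter hQ
    (cross_ne_zero_of_generalPosition hP (mem_increasingPairs.1 hz).ne) (hPQ _) (hPQ _)
    (hP _ _ _ h11 h12 hw') (hP _ _ _ h21 h22 hw')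

theorem two_mul_ncard_linesThrough_diff_conicPoints [Finite F] :
    2 * (linesThrough P \ conicPoints Q).ncard + 30 = 20 * (Nat.card F - 1) := by
  classical
  have := Fintype.ofFinite (ℙ F (Fin 3 → F))
  let A (z : Fin 5 × Fin 5) := (lineOffConic P Q z).toFinset
  have hU : (linesThrough P \ conicPoints Q).ncard = #(increasingPairs.biUnion A) := by
    rw [← ncard_coe_finset]
    congr 1
    ext p
    simp only [A, coe_biUnion, mem_coe, Set.mem_toFinset, mem_iUnion, exists_prop, Prod.exists,
      mem_increasingPairs]
    simp only [lineOffConic, mem_sdiff, mem_linesThrough_iff]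
    constructor
    · rintro ⟨⟨i, j, hij, hp⟩, hC⟩
      exact ⟨i, j, hij, hp, hC⟩
    · rintro ⟨i, j, hij, hp, hC⟩
      exact ⟨⟨i, j, hij, hp⟩, hC⟩
  have hA (z) (hz : z ∈ increasingPairs) : #(A z) = Nat.card F - 1 := by
    rw [← ncard_eq_toFinset_card', ncard_lineOffConic hP hQ hPQ hQs hz]
  have hAA (zw) (hzw : zw ∈ increasingPairs.offDiag) :
      #(A zw.1 ∩ A zw.2) = if SharesEntry zw.1 zw.2 then 0 else 1 := by
    obtain ⟨hz, hw, hzw⟩ := mem_offDiag.1 hzw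
    rw [← toFinset_inter, ← ncard_eq_toFinset_card']
    split_ifs with hsh
    · rw [lineOffConic_inter_eq_empty hP hQ hPQ hz hw hzw hsh, ncard_empty]
    · exact ncard_lineOffConic_inter_of_not_sharesEntry hP hQ hPQ hQs hz hw hsh
  have key := two_mul_card_biUnion_add_sum_card_inter increasingPairs A fun x => by
    simpa [A] using card_filter_mem_lineOffConic_le_two hP hQ hPQ x
  rw [sum_congr rfl hAA, sum_ite, sum_const_zero, sum_const, smul_eq_mul, mul_one,
    card_filter_not_sharesEntry, sum_congr rfl hA, sum_const, card_increasingPairs, smul_eq_mul,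
    ← hU] at key
  omega

end FivePoints

theorem card_union_conic_and_ten_lines_general {F : Type*} [Field F] [Fintype F]
    (P : Fin 5 → (Fin 3 → F))
    (hgen : ∀ i j l : Fin 5, i ≠ j → i ≠ l → j ≠ l → ¬ Collinear3 (P i) (P j) (P l))
    (Q : MvPolynomial (Fin 3) F) (hQ2 : Q.IsHomogeneous 2)
    (hQs : SmoothPlaneCurve Q) (hQP : ∀ i, MvPolynomial.eval (P i) Q = 0) :
    Nat.card {p : Projectivization F (Fin 3 → F) //
        p ∈ conicPoints Q ∪ linesThrough P} = 11 * Fintype.card F - 24 := by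
  have hP : ∀ i j k, i ≠ j → i ≠ k → j ≠ k → P i ⬝ᵥ P j ⨯₃ P k ≠ 0 :=
    fun i j k hij hik hjk h => hgen i j k hij hik hjk (collinear3_of_triple_product_eq_zero h)
  have hC := hQs.ncard_conicPoints hQ2 (ne_zero_of_generalPosition hP 0) (hQP 0)
  have hL := two_mul_ncard_linesThrough_diff_conicPoints hP hQ2 hQP hQs
  rw [Nat.card_coe_set_eq, ← union_sdiff_self, ncard_union_eq disjoint_sdiff_self_right, hC]
  rw [Nat.card_eq_fintype_card] at hL ⊢
  omega

/-- For `q ≥ 4`, given five points of `ℙ²(𝔽_q)` in general position, the union `𝔠` of the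
smooth conic `C` through them and the ten lines through pairs of them has exactly
`11q − 24` rational points. -/
theorem card_union_conic_and_ten_lines {F : Type*} [Field F] [Fintype F]
    (hq : 4 ≤ Fintype.card F)
    (P : Fin 5 → (Fin 3 → F))
    (h0 : ∀ i, P i ≠ 0)
    (hdist : ∀ i j, i ≠ j → ∀ c : F, c • P i ≠ P j)
    (hgen : ∀ i j l : Fin 5, i ≠ j → i ≠ l → j ≠ l → ¬ Collinear3 (P i) (P j) (P l))
    (Q : MvPolynomial (Fin 3) F) (hQ2 : Q.IsHomogeneous 2) (hQ0 : Q ≠ 0)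
    (hQs : SmoothPlaneCurve Q) (hQP : ∀ i, MvPolynomial.eval (P i) Q = 0) :
    Nat.card {p : Projectivization F (Fin 3 → F) //
        p ∈ conicPoints Q ∪ linesThrough P} = 11 * Fintype.card F - 24 :=
  card_union_conic_and_ten_lines_general P hgen Q hQ2 hQs hQP
end

section
/- Let α_1,...,α_6 be a basis of 𝔽_{q^6} over 𝔽_q. Then the determinant of the 6×6 matrix whose i-th row is (1, α_i², α_i⁶, α_i, α_i³, α_i⁴) (the conic-condition matrix for the points [1 : α_i : α_i³]) equals ∏_{1≤i<j≤6} (α_j − α_i) · (α_1 + ⋯ + α_6), which is nonzero; hence the six points [1 : α_i : α_i³] do not lie on a common conic. -/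
/-!
After reordering its columns, the matrix is the Vandermonde matrix of `α` with its last column
`α ^ 5` replaced by `α ^ 6`. The polynomial `X ^ 6 - ∏ j, (X - α j)` agrees with `X ^ 6` at every
`α i`, has degree `< 6` and `X ^ 5`-coefficient `∑ j, α j`; so the new column is
`(∑ j, α j) • α ^ 5` plus a combination of the other columns, and the determinant is
`(∑ j, α j) * det (vandermonde α)`. A basis consists of distinct vectors with nonzero sum, so this
is nonzero, and the coefficient vector of a conic through the six points, lying in the kernel of
the matrix, vanishes.
-/

open Matrix

theorem Matrix.det_updateCol_mulVec_self {n R : Type*} [Fintype n] [DecidableEq n] [CommRing R]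
    (A : Matrix n n R) (c : n → R) (j : n) :
    (A.updateCol j (A *ᵥ c)).det = c j * A.det := by
  rw [← cramer_apply, cramer_eq_adjugate_mulVec, mulVec_mulVec, adjugate_mul, smul_mulVec,
    one_mulVec, Pi.smul_apply, smul_eq_mul, mul_comm]

open Polynomial in
theorem Matrix.det_updateCol_last_vandermonde_pow_succ {R : Type*} [CommRing R] {n : ℕ}
    (v : Fin (n + 1) → R) :
    ((vandermonde v).updateCol (Fin.last n) fun i => v i ^ (n + 1)).det
      = (∑ i, v i) * (vandermonde v).det := by
  nontriviality R
  set p : R[X] := ∏ i, (X - C (v i))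
  have hp : p.IsMonicOfDegree (n + 1) :=
    ⟨by simp [p], monic_prod_of_monic _ _ fun i _ => monic_X_sub_C (v i)⟩
  set r : R[X] := X ^ (n + 1) - p
  have hr : r.natDegree < n + 1 :=
    (isMonicOfDegree_X_pow (R := R) (n + 1)).natDegree_sub_lt n.succ_ne_zero hp
  have hcol : (fun i => v i ^ (n + 1)) = vandermonde v *ᵥ fun k => r.coeff k := by
    funext i
    have hroot : p.eval (v i) = 0 := by
      simp only [p, eval_prod, eval_sub, eval_X, eval_C]
      exact Finset.prod_eq_zero (Finset.mem_univ i) (sub_self _)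
    have hr_eval : r.eval (v i) = v i ^ (n + 1) := by simp [r, hroot]
    rw [← hr_eval, eval_eq_sum_range' hr, ← Fin.sum_univ_eq_sum_range]
    simp only [mulVec, dotProduct, vandermonde_apply, mul_comm]
  have hlast : r.coeff n = ∑ i, v i := by
    have hnext := prod_X_sub_C_nextCoeff (s := Finset.univ) v
    rw [nextCoeff_of_natDegree_pos (by rw [hp.natDegree_eq]; omega), hp.natDegree_eq,
      Nat.add_sub_cancel] at hnext
    simp [r, p, hnext]
  rw [hcol, det_updateCol_mulVec_self, Fin.val_last, hlast]

theorem Matrix.det_vandermonde_eq_prod_filter_lt {R : Type*} [CommRing R] {n : ℕ}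
    (v : Fin n → R) :
    (vandermonde v).det = ∏ p ∈ Finset.univ.filter (fun p : Fin n × Fin n => p.1 < p.2),
      (v p.2 - v p.1) := by
  simp_rw [det_vandermonde, Finset.prod_filter, Fintype.prod_prod_type, ← Finset.prod_filter,
    Finset.filter_lt_eq_Ioi]

theorem LinearIndependent.sum_ne_zero {ι R M : Type*} [Fintype ι] [Nonempty ι] [Ring R]
    [Nontrivial R] [AddCommGroup M] [Module R M] {v : ι → M} (hv : LinearIndependent R v) :
    ∑ i, v i ≠ 0 := fun h =>
  one_ne_zero <|
    Fintype.linearIndependent_iff.mp hv (fun _ => (1 : R)) (by simpa using h)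
      (Classical.arbitrary ι)

open MvPolynomial

theorem MvPolynomial.eq_zero_of_det_eval_monomial_ne_zero {ι σ R : Type*} [Fintype ι]
    [DecidableEq ι] [CommRing R] [IsDomain R] {m : ι → σ →₀ ℕ} (hm : Function.Injective m)
    {P : ι → σ → R} (hdet : (Matrix.of fun i j => eval (P i) (monomial (m j) 1)).det ≠ 0)
    {Q : MvPolynomial σ R} (hQ : ∀ d ∈ Q.support, d ∈ Set.range m)
    (hP : ∀ i, eval (P i) Q = 0) : Q = 0 := by
  classical
  have hQsum : Q = ∑ j, monomial (m j) (Q.coeff (m j)) := by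
    have hsub : Q.support ⊆ Finset.univ.image m := fun d hd => by
      obtain ⟨j, rfl⟩ := hQ d hd
      exact Finset.mem_image_of_mem m (Finset.mem_univ j)
    conv_lhs => rw [Q.as_sum, Finset.sum_subset hsub fun d _ hd => by
      rw [notMem_support_iff.mp hd, monomial_zero]]
    exact Finset.sum_image fun a _ b _ h => hm h
  have hmulVec : (Matrix.of fun i j => eval (P i) (monomial (m j) 1)) *ᵥ
      (fun j => Q.coeff (m j)) = 0 := by
    funext i
    rw [Pi.zero_apply, ← hP i]
    conv_rhs => rw [hQsum]
    simp [mulVec, dotProduct, eval_monomial, mul_comm]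
  have hcoeff := eq_zero_of_mulVec_eq_zero hdet hmulVec
  ext d
  by_cases hd : d ∈ Q.support
  · obtain ⟨j, rfl⟩ := hQ d hd
    exact congr_fun hcoeff j
  · exact notMem_support_iff.mp hd

noncomputable def conicMonomial (j : Fin 6) : Fin 3 →₀ ℕ :=
  Finsupp.equivFunOnFinite.symm
    (![![2, 0, 0], ![0, 2, 0], ![0, 0, 2], ![1, 1, 0], ![1, 0, 1], ![0, 1, 1]] j)

theorem conicMonomial_injective : Function.Injective conicMonomial :=
  Finsupp.equivFunOnFinite.symm.injective.comp (by decide)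

theorem mem_range_conicMonomial {d : Fin 3 →₀ ℕ} (hd : d.degree = 2) :
    d ∈ Set.range conicMonomial := by
  rw [Finsupp.degree_eq_sum, Fin.sum_univ_three] at hd
  suffices ∃ j, ![![2, 0, 0], ![0, 2, 0], ![0, 0, 2], ![1, 1, 0], ![1, 0, 1], ![0, 1, 1]] j
      = ![d 0, d 1, d 2] by
    obtain ⟨j, hj⟩ := this
    refine ⟨j, Finsupp.ext fun k => ?_⟩
    fin_cases k <;> simp [conicMonomial, hj]
  rcases (by omega : (d 0 = 2 ∧ d 1 = 0 ∧ d 2 = 0) ∨ (d 0 = 0 ∧ d 1 = 2 ∧ d 2 = 0) ∨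
      (d 0 = 0 ∧ d 1 = 0 ∧ d 2 = 2) ∨ (d 0 = 1 ∧ d 1 = 1 ∧ d 2 = 0) ∨
      (d 0 = 1 ∧ d 1 = 0 ∧ d 2 = 1) ∨ (d 0 = 0 ∧ d 1 = 1 ∧ d 2 = 1))
    with ⟨h0, h1, h2⟩ | ⟨h0, h1, h2⟩ | ⟨h0, h1, h2⟩ | ⟨h0, h1, h2⟩ | ⟨h0, h1, h2⟩ | ⟨h0, h1, h2⟩ <;>
    rw [h0, h1, h2] <;> decide

noncomputable def conicConditionMatrix {R : Type*} [CommRing R] (P : Fin 6 → Fin 3 → R) :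
    Matrix (Fin 6) (Fin 6) R :=
  Matrix.of fun i j => eval (P i) (monomial (conicMonomial j) 1)

theorem eq_zero_of_det_conicConditionMatrix_ne_zero {R : Type*} [CommRing R] [IsDomain R]
    {P : Fin 6 → Fin 3 → R} (hdet : (conicConditionMatrix P).det ≠ 0)
    {Q : MvPolynomial (Fin 3) R} (hQ : Q.IsHomogeneous 2) (hP : ∀ i, eval (P i) Q = 0) :
    Q = 0 :=
  eq_zero_of_det_eval_monomial_ne_zero conicMonomial_injective hdet
    (fun d hd => mem_range_conicMonomial <| by
      rw [Finsupp.degree_eq_weight_one]; exact hQ (mem_support_iff.mp hd)) hP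

theorem conicConditionMatrix_one_self_cube {R : Type*} [CommRing R] (α : Fin 6 → R) :
    conicConditionMatrix (fun i => ![1, α i, α i ^ 3])
      = Matrix.of fun i => ![1, α i ^ 2, α i ^ 6, α i, α i ^ 3, α i ^ 4] := by
  ext i j
  fin_cases j <;>
    simp [conicConditionMatrix, conicMonomial, eval_monomial, Finsupp.prod_fintype,
      Fin.prod_univ_three] <;> ring

theorem det_conicConditionMatrix_one_self_cube {R : Type*} [CommRing R] (α : Fin 6 → R) :
    (conicConditionMatrix fun i => ![1, α i, α i ^ 3]).det
      = (∑ i, α i) * (vandermonde α).det := by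
  let σ : Equiv.Perm (Fin 6) := ⟨![0, 2, 5, 1, 3, 4], ![0, 3, 1, 4, 5, 2], by decide, by decide⟩
  have hσ : conicConditionMatrix (fun i => ![1, α i, α i ^ 3])
      = ((vandermonde α).updateCol (Fin.last 5) fun i => α i ^ 6).submatrix id σ := by
    ext i j
    rw [conicConditionMatrix_one_self_cube]
    fin_cases j <;> simp [σ, vandermonde_apply]
  rw [hσ, det_permute', show Equiv.Perm.sign σ = 1 by decide, Units.val_one, Int.cast_one,
    one_mul, det_updateCol_last_vandermonde_pow_succ]

theorem normal_basis_points_not_on_conic_general {F K : Type*} [Field F]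
    [Field K] [Algebra F K]
    (α : Fin 6 → K)
    (hbasis : LinearIndependent F α) :
    (Matrix.of (fun i : Fin 6 =>
        ![1, α i ^ 2, α i ^ 6, α i, α i ^ 3, α i ^ 4])).det
      = (∏ p ∈ Finset.univ.filter (fun p : Fin 6 × Fin 6 => p.1 < p.2),
          (α p.2 - α p.1)) * (∑ i, α i) ∧
    (∏ p ∈ Finset.univ.filter (fun p : Fin 6 × Fin 6 => p.1 < p.2),
          (α p.2 - α p.1)) * (∑ i, α i) ≠ 0 ∧
    ¬ ∃ Q : MvPolynomial (Fin 3) K, Q.IsHomogeneous 2 ∧ Q ≠ 0 ∧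
        ∀ i : Fin 6, MvPolynomial.eval ![1, α i, α i ^ 3] Q = 0 := by
  have hdet := det_conicConditionMatrix_one_self_cube α
  have hne : (∑ i, α i) * (vandermonde α).det ≠ 0 :=
    mul_ne_zero hbasis.sum_ne_zero (det_vandermonde_ne_zero_iff.mpr hbasis.injective)
  rw [← conicConditionMatrix_one_self_cube, ← det_vandermonde_eq_prod_filter_lt,
    mul_comm _ (∑ i, α i)]
  exact ⟨hdet, hne, fun ⟨Q, hQ, hQ0, hQα⟩ =>
    hQ0 (eq_zero_of_det_conicConditionMatrix_ne_zero (hdet ▸ hne) hQ hQα)⟩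

/-- Let `α₁, …, α₆` be a basis of `𝔽_{q⁶}` over `𝔽_q`.  The determinant of the 6×6 matrix
whose `i`-th row is `(1, α_i², α_i⁶, α_i, α_i³, α_i⁴)` (the conic-condition matrix for the
points `[1 : α_i : α_i³]`) equals `∏_{i<j} (α_j − α_i) · (α₁ + ⋯ + α₆)`, which is nonzero;
hence the six points `[1 : α_i : α_i³]` do not lie on a common conic. -/
theorem normal_basis_points_not_on_conic {F K : Type*} [Field F] [Fintype F]
    [Field K] [Algebra F K]
    (α : Fin 6 → K)
    (hbasis : LinearIndependent F α) :
    (Matrix.of (fun i : Fin 6 =>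
        ![1, α i ^ 2, α i ^ 6, α i, α i ^ 3, α i ^ 4])).det
      = (∏ p ∈ Finset.univ.filter (fun p : Fin 6 × Fin 6 => p.1 < p.2),
          (α p.2 - α p.1)) * (∑ i, α i) ∧
    (∏ p ∈ Finset.univ.filter (fun p : Fin 6 × Fin 6 => p.1 < p.2),
          (α p.2 - α p.1)) * (∑ i, α i) ≠ 0 ∧
    ¬ ∃ Q : MvPolynomial (Fin 3) K, Q.IsHomogeneous 2 ∧ Q ≠ 0 ∧
        ∀ i : Fin 6, MvPolynomial.eval ![1, α i, α i ^ 3] Q = 0 :=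
  normal_basis_points_not_on_conic_general α hbasis
end
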